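/- For every rational number m, the values x1 = (m−1)·f1(m)·f5(m), x2 = (m+1)·f1(−m)·f5(m), x3 = (m+1)^2·f2(−m)·f6(m), x4 = −(m−1)^2·f2(m)·f6(m), y1 = (m−1)·f3(m)·f6(m), y2 = (m+1)·f3(−m)·f6(m), y3 = −(m−1)·f4(m)·f5(m), y4 = −(m+1)·f4(−m)·f5(m) satisfy simultaneously (x1^5+x2^5)(x3^5+x4^5) = (y1^5+y2^5)(y3^5+y4^5), x1+x2 = y1+y2, and x3+x4 = y3+y4. -/
import Mathlib



def f1 (m : ℚ) : ℚ :=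
  5 * m ^ 14 + 7 * m ^ 13 + 71 * m ^ 12 + 30 * m ^ 11 + 345 * m ^ 10 +
    17 * m ^ 9 + 907 * m ^ 8 - 60 * m ^ 7 + 1311 * m ^ 6 - 71 * m ^ 5 +
    1109 * m ^ 4 + 62 * m ^ 3 + 323 * m ^ 2 + 15 * m + 25

def f2 (m : ℚ) : ℚ :=
  m ^ 10 + 7 * m ^ 9 + 29 * m ^ 8 + 44 * m ^ 7 + 122 * m ^ 6 + 98 * m ^ 5 +
    202 * m ^ 4 + 92 * m ^ 3 + 133 * m ^ 2 + 15 * m + 25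

def f3 (m : ℚ) : ℚ :=
  5 * m ^ 14 + 21 * m ^ 13 + 29 * m ^ 12 + 202 * m ^ 11 + 109 * m ^ 10 +
    755 * m ^ 9 + 173 * m ^ 8 + 1388 * m ^ 7 + 23 * m ^ 6 + 1259 * m ^ 5 -
    177 * m ^ 4 + 426 * m ^ 3 - 137 * m ^ 2 + 45 * m - 25

def f4 (m : ℚ) : ℚ :=
  m ^ 11 + 6 * m ^ 10 + 8 * m ^ 9 + 57 * m ^ 8 + 46 * m ^ 7 + 184 * m ^ 6 +
    92 * m ^ 5 + 294 * m ^ 4 + 89 * m ^ 3 + 202 * m ^ 2 + 20 * m + 25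

def f5 (m : ℚ) : ℚ :=
  5 * m ^ 8 - 12 * m ^ 6 - 90 * m ^ 4 - 124 * m ^ 2 - 35

def f6 (m : ℚ) : ℚ :=
  5 * m ^ 8 + 44 * m ^ 6 + 94 * m ^ 4 + 108 * m ^ 2 + 5

theorem stmt_13 (m : ℚ) :
    let x₁ := (m - 1) * f1 m * f5 m
    let x₂ := (m + 1) * f1 (-m) * f5 m
    let x₃ := (m + 1) ^ 2 * f2 (-m) * f6 m
    let x₄ := -((m - 1) ^ 2 * f2 m * f6 m)
    let y₁ := (m - 1) * f3 m * f6 m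
    let y₂ := (m + 1) * f3 (-m) * f6 m
    let y₃ := -((m - 1) * f4 m * f5 m)
    let y₄ := -((m + 1) * f4 (-m) * f5 m)
    (x₁ ^ 5 + x₂ ^ 5) * (x₃ ^ 5 + x₄ ^ 5) =
        (y₁ ^ 5 + y₂ ^ 5) * (y₃ ^ 5 + y₄ ^ 5) ∧
    x₁ + x₂ = y₁ + y₂ ∧ x₃ + x₄ = y₃ + y₄ := by
  refine ⟨?_, ?_, ?_⟩ <;>
    simp only [f1, f2, f3, f4, f5, f6] <;> ring
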